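/- arXiv:1501.01242 — 2 statements merged into one kernel-verified Lean document; each statement's English description precedes it below -/
import Mathlib

section
/- Let K be a real symmetric positive semidefinite n×n matrix and let γ ≥ 0. Then K − γG has at most one negative eigenvalue: if its eigenvalues are listed in nondecreasing order λ_1 ≤ λ_2 ≤ … ≤ λ_n, then λ_2 ≥ 0. Here G = G(a,b,c) is the canonical gradient matrix of a triplet of distinct indices. -/
/-!
The quadratic form of `G(a,b,c)` is `(x_b - x_c)(x_b + x_c - 4 x_a)`, which vanishes on the
hyperplane `x_b = x_c`. Hence the form of `K - γ G` is nonnegative on that hyperplane. Two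
eigenvectors with negative eigenvalues would span a plane on which the form is negative definite,
and a plane always meets a hyperplane nontrivially.
-/

/-- The canonical gradient matrix `G(a,b,c)` of a triplet of indices. -/
def canonG {n : ℕ} (a b c : Fin n) : Matrix (Fin n) (Fin n) ℝ :=
  fun i j =>
    if (i = a ∧ j = b) ∨ (i = b ∧ j = a) then -2
    else if (i = a ∧ j = c) ∨ (i = c ∧ j = a) then 2
    else if i = b ∧ j = b then 1
    else if i = c ∧ j = c then -1
    else 0

open Matrix

namespace Matrix.IsHermitian

variable {ι : Type*} [Fintype ι] [DecidableEq ι] {M : Matrix ι ι ℝ} (hM : M.IsHermitian)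

lemma dotProduct_eigenvectorBasis (i j : ι) :
    ⇑(hM.eigenvectorBasis i) ⬝ᵥ ⇑(hM.eigenvectorBasis j) = if i = j then 1 else 0 := by
  rw [← orthonormal_iff_ite.mp hM.eigenvectorBasis.orthonormal i j,
    EuclideanSpace.inner_eq_star_dotProduct, dotProduct_comm]
  rfl

lemma dotProduct_mulVec_add_eigenvectorBasis {i j : ι} (hij : i ≠ j) (α β : ℝ) :
    (α • ⇑(hM.eigenvectorBasis i) + β • ⇑(hM.eigenvectorBasis j)) ⬝ᵥ
        (M *ᵥ (α • ⇑(hM.eigenvectorBasis i) + β • ⇑(hM.eigenvectorBasis j))) =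
      α ^ 2 * hM.eigenvalues i + β ^ 2 * hM.eigenvalues j := by
  simp only [mulVec_add, mulVec_smul, hM.mulVec_eigenvectorBasis, add_dotProduct,
    dotProduct_add, smul_dotProduct, dotProduct_smul, hM.dotProduct_eigenvectorBasis,
    if_neg hij, if_neg hij.symm, if_pos, smul_eq_mul]
  ring

theorem card_neg_eigenvalues_le_one_of_nonneg_on_hyperplane (u : ι → ℝ)
    (h : ∀ x, u ⬝ᵥ x = 0 → 0 ≤ x ⬝ᵥ (M *ᵥ x)) :
    (Finset.univ.filter fun i => hM.eigenvalues i < 0).card ≤ 1 := by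
  by_contra! hcard
  obtain ⟨i, hi, j, hj, hij⟩ := Finset.one_lt_card.mp hcard
  simp only [Finset.mem_filter, Finset.mem_univ, true_and] at hi hj
  set v := ⇑(hM.eigenvectorBasis i)
  set w := ⇑(hM.eigenvectorBasis j)
  obtain ⟨α, β, hαβ, hu⟩ :
      ∃ α β : ℝ, (α ≠ 0 ∨ β ≠ 0) ∧ u ⬝ᵥ (α • v + β • w) = 0 := by
    by_cases hv : u ⬝ᵥ v = 0
    · exact ⟨1, 0, Or.inl one_ne_zero, by simp [hv]⟩
    · refine ⟨u ⬝ᵥ w, -(u ⬝ᵥ v), Or.inr (neg_ne_zero.mpr hv), ?_⟩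
      simp only [dotProduct_add, dotProduct_smul, smul_eq_mul]
      ring
  have hx := h _ hu
  rw [hM.dotProduct_mulVec_add_eigenvectorBasis hij] at hx
  rcases hαβ with hα | hβ
  · nlinarith [sq_pos_of_ne_zero hα, sq_nonneg β]
  · nlinarith [sq_pos_of_ne_zero hβ, sq_nonneg α]

end Matrix.IsHermitian

lemma Matrix.dotProduct_single_mulVec {ι R : Type*} [Fintype ι] [DecidableEq ι]
    [CommSemiring R] (x y : ι → R) (i j : ι) (r : R) :
    x ⬝ᵥ (single i j r *ᵥ y) = x i * r * y j := by
  rw [single_mulVec_eq, dotProduct_smul, dotProduct_single, smul_eq_mul, mul_one]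
  ring

section canonG

variable {n : ℕ} {a b c : Fin n}

lemma canonG_eq_sum_single (hab : a ≠ b) (hac : a ≠ c) (hbc : b ≠ c) :
    canonG a b c = single b b 1 - single c c 1 - single a b 2 - single b a 2 +
      single a c 2 + single c a 2 := by
  ext i j
  simp only [canonG, Matrix.add_apply, Matrix.sub_apply, single_apply, @eq_comm _ i, @eq_comm _ j]
  by_cases h1 : a = i <;> by_cases h2 : b = i <;> by_cases h3 : c = i <;>
    by_cases h4 : a = j <;> by_cases h5 : b = j <;> by_cases h6 : c = j <;>
    simp_all

lemma dotProduct_canonG_mulVec (hab : a ≠ b) (hac : a ≠ c) (hbc : b ≠ c) (x : Fin n → ℝ) :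
    x ⬝ᵥ (canonG a b c *ᵥ x) = (x b - x c) * (x b + x c - 4 * x a) := by
  simp only [canonG_eq_sum_single hab hac hbc, add_mulVec, sub_mulVec, dotProduct_add,
    dotProduct_sub, dotProduct_single_mulVec]
  ring

end canonG

theorem atMostOne_neg_eigenvalue_sub_smul_canonG_general {n : ℕ} (a b c : Fin n)
    (hab : a ≠ b) (hac : a ≠ c) (hbc : b ≠ c)
    (K : Matrix (Fin n) (Fin n) ℝ) (hK : K.PosSemidef) (γ : ℝ)
    (hM : (K - γ • canonG a b c).IsHermitian) :
    (Finset.univ.filter fun i : Fin n => hM.eigenvalues i < 0).card ≤ 1 := by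
  refine hM.card_neg_eigenvalues_le_one_of_nonneg_on_hyperplane (Pi.single b 1 - Pi.single c 1)
    fun x hx => ?_
  have hxbc : x b = x c := by simpa [sub_dotProduct, sub_eq_zero] using hx
  calc 0 ≤ x ⬝ᵥ (K *ᵥ x) := by simpa using hK.dotProduct_mulVec_nonneg x
    _ = x ⬝ᵥ ((K - γ • canonG a b c) *ᵥ x) := by
      rw [sub_mulVec, dotProduct_sub, smul_mulVec, dotProduct_smul,
        dotProduct_canonG_mulVec hab hac hbc, hxbc, sub_self, zero_mul, smul_zero, sub_zero]

/-- If `K` is PSD and `γ ≥ 0`, then `K - γ • G(a,b,c)` has at most one negative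
eigenvalue: listing its eigenvalues in nondecreasing order, the second smallest is
nonnegative. -/
theorem atMostOne_neg_eigenvalue_sub_smul_canonG {n : ℕ} (hn : 3 ≤ n) (a b c : Fin n)
    (hab : a ≠ b) (hac : a ≠ c) (hbc : b ≠ c)
    (K : Matrix (Fin n) (Fin n) ℝ) (hK : K.PosSemidef) (γ : ℝ) (hγ : 0 ≤ γ)
    (hM : (K - γ • canonG a b c).IsHermitian) :
    (Finset.univ.filter fun i : Fin n => hM.eigenvalues i < 0).card ≤ 1 :=
  atMostOne_neg_eigenvalue_sub_smul_canonG_general a b c hab hac hbc K hK γ hM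
end

section
/- (Theorem 1 of the paper.) Let K be a real symmetric positive semidefinite n×n matrix, γ ≥ 0, and K' = K − γG, where G = G(a,b,c) is the canonical gradient matrix of a triplet of distinct indices. Define K'' = K' if K' is positive semidefinite; otherwise let λ↓ < 0 be the smallest eigenvalue of K' with unit eigenvector v↓ and set K'' = K' − λ↓ v↓ v↓ᵀ. Then K'' is positive semidefinite, and for every positive semidefinite n×n matrix P, ‖K' − K''‖_F ≤ ‖K' − P‖_F; i.e., K'' is the positive semidefinite matrix closest to K' in Frobenius distance. -/
/-- The Frobenius norm of a real matrix. -/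
noncomputable def frobNorm {n : ℕ} (A : Matrix (Fin n) (Fin n) ℝ) : ℝ :=
  Real.sqrt (∑ i, ∑ j, (A i j) ^ 2)

/-!
With `u = 2eₐ - 2e_b + e_c` and `s = 2eₐ + e_b - 2e_c` one has `3 G = u uᵀ - s sᵀ`, so
`K' = (K + (γ/3) s sᵀ) - (γ/3) u uᵀ` is a PSD matrix minus a rank-one one and its quadratic form
is nonnegative on the hyperplane `u⊥`. Hence `K'` has at most one negative eigenvalue: if
`K' v = λ v` with `λ < 0`, the form is nonnegative on `v⊥` (test it on the vector of `u⊥` spanned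
by `v` and `w ⊥ v`), so removing `λ v vᵀ` leaves a PSD matrix. It is the nearest one since for
PSD `P`, `‖K' - P‖_F ≥ |vᵀ (K' - P) v| = vᵀ P v - λ ≥ -λ = ‖K' - K''‖_F`.
-/

open Matrix

section

variable {m : Type*} [Fintype m]

theorem dotProduct_vecMulVec_mulVec {R : Type*} [CommSemiring R] (x u w y : m → R) :
    x ⬝ᵥ vecMulVec u w *ᵥ y = (x ⬝ᵥ u) * (w ⬝ᵥ y) := by
  rw [vecMulVec_mulVec, op_smul_eq_smul, dotProduct_smul, smul_eq_mul, mul_comm]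

theorem Matrix.IsHermitian.dotProduct_mulVec_comm {A : Matrix m m ℝ} (hA : A.IsHermitian)
    (x y : m → ℝ) : x ⬝ᵥ A *ᵥ y = y ⬝ᵥ A *ᵥ x := by
  rw [dotProduct_mulVec, ← mulVec_transpose, (isHermitian_iff_isSymm.mp hA).eq, dotProduct_comm]

theorem Matrix.PosSemidef.dotProduct_sub_smul_vecMulVec_mulVec_nonneg {P : Matrix m m ℝ}
    (hP : P.PosSemidef) (r : ℝ) {u x : m → ℝ} (hx : u ⬝ᵥ x = 0) :
    0 ≤ x ⬝ᵥ (P - r • vecMulVec u u) *ᵥ x := by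
  simpa [sub_mulVec, smul_mulVec, dotProduct_vecMulVec_mulVec, dotProduct_comm x u, hx]
    using hP.dotProduct_mulVec_nonneg x

theorem dotProduct_mulVec_nonneg_of_orthogonal_eigenvector {A : Matrix m m ℝ}
    (hA : A.IsHermitian) {u : m → ℝ} (hu : ∀ x, u ⬝ᵥ x = 0 → 0 ≤ x ⬝ᵥ A *ᵥ x)
    {lam : ℝ} (hlam : lam < 0) {v : m → ℝ} (hv0 : v ≠ 0) (hv : A *ᵥ v = lam • v)
    {w : m → ℝ} (hw : v ⬝ᵥ w = 0) : 0 ≤ w ⬝ᵥ A *ᵥ w := by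
  have hvv : 0 < v ⬝ᵥ v :=
    lt_of_le_of_ne (by simpa using dotProduct_star_self_nonneg v)
      (Ne.symm (dotProduct_self_eq_zero.not.mpr hv0))
  have hvAw : v ⬝ᵥ A *ᵥ w = 0 := by
    rw [hA.dotProduct_mulVec_comm, hv, dotProduct_smul, dotProduct_comm, hw, smul_zero]
  set z := (u ⬝ᵥ w) • v - (u ⬝ᵥ v) • w
  have hz : u ⬝ᵥ z = 0 := by
    simp only [z, dotProduct_sub, dotProduct_smul, smul_eq_mul]; ring
  have hzAz : z ⬝ᵥ A *ᵥ z = (u ⬝ᵥ w) ^ 2 * lam * (v ⬝ᵥ v) + (u ⬝ᵥ v) ^ 2 * (w ⬝ᵥ A *ᵥ w) := by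
    simp only [z, mulVec_sub, mulVec_smul, hv, sub_dotProduct, dotProduct_sub, smul_dotProduct,
      dotProduct_smul, smul_eq_mul, hvAw, dotProduct_comm w v, hw]
    ring
  by_contra! hneg
  have huw : u ⬝ᵥ w ≠ 0 := fun h => hneg.not_ge (hu w h)
  have := hu z hz
  nlinarith [sq_pos_of_ne_zero huw, mul_neg_of_neg_of_pos hlam hvv, sq_nonneg (u ⬝ᵥ v)]

theorem Matrix.IsHermitian.posSemidef_sub_smul_vecMulVec {A : Matrix m m ℝ}
    (hA : A.IsHermitian) {lam : ℝ} {v : m → ℝ} (hv : A *ᵥ v = lam • v) (hv1 : v ⬝ᵥ v = 1)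
    (hperp : ∀ w, v ⬝ᵥ w = 0 → 0 ≤ w ⬝ᵥ A *ᵥ w) :
    (A - lam • vecMulVec v v).PosSemidef := by
  have hvv : (vecMulVec v v).IsHermitian := by
    simpa using (posSemidef_vecMulVec_self_star v).isHermitian
  refine .of_dotProduct_mulVec_nonneg (hA.sub (hvv.smul (IsSelfAdjoint.all lam))) fun x => ?_
  set w := x - (v ⬝ᵥ x) • v
  have hw : v ⬝ᵥ w = 0 := by simp [w, dotProduct_sub, dotProduct_smul, hv1]
  have hvAw : v ⬝ᵥ A *ᵥ w = 0 := by
    rw [hA.dotProduct_mulVec_comm, hv, dotProduct_smul, dotProduct_comm, hw, smul_zero]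
  have hx : x = w + (v ⬝ᵥ x) • v := by simp [w]
  have hAx : (A - lam • vecMulVec v v) *ᵥ x = A *ᵥ w := by
    rw [sub_mulVec, smul_mulVec, vecMulVec_mulVec, op_smul_eq_smul, hx, mulVec_add,
      mulVec_smul, hv, dotProduct_add, dotProduct_smul, hw, hv1]
    module
  rw [star_trivial, hAx, hx, add_dotProduct, smul_dotProduct, hvAw, smul_zero, add_zero]
  exact hperp w hw

end

section

variable {n : ℕ}

theorem frobNorm_smul_vecMulVec_self (lam : ℝ) (v : Fin n → ℝ) :
    frobNorm (lam • vecMulVec v v) = |lam| * (v ⬝ᵥ v) := by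
  have hvv : 0 ≤ v ⬝ᵥ v := by simpa using dotProduct_star_self_nonneg v
  have hsum : ∑ i, ∑ j, ((lam • vecMulVec v v) i j) ^ 2 = (|lam| * (v ⬝ᵥ v)) ^ 2 := by
    rw [mul_pow, sq_abs, sq (v ⬝ᵥ v), dotProduct, Finset.sum_mul_sum, Finset.mul_sum]
    refine Finset.sum_congr rfl fun i _ => ?_
    rw [Finset.mul_sum]
    exact Finset.sum_congr rfl fun j _ => by simp only [Matrix.smul_apply, vecMulVec_apply]; ring
  rw [frobNorm, hsum, Real.sqrt_sq (by positivity)]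

theorem abs_dotProduct_mulVec_le_frobNorm (A : Matrix (Fin n) (Fin n) ℝ) (x : Fin n → ℝ) :
    |x ⬝ᵥ A *ᵥ x| ≤ (x ⬝ᵥ x) * frobNorm A := by
  have hxx : 0 ≤ x ⬝ᵥ x := by simpa using dotProduct_star_self_nonneg x
  have hsq : ∑ p : Fin n × Fin n, (x p.1 * x p.2) ^ 2 = (x ⬝ᵥ x) ^ 2 := by
    rw [Fintype.sum_prod_type, sq (x ⬝ᵥ x), dotProduct, Finset.sum_mul_sum]
    exact Finset.sum_congr rfl fun i _ => Finset.sum_congr rfl fun j _ => by ring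
  have hform : x ⬝ᵥ A *ᵥ x = ∑ p : Fin n × Fin n, (x p.1 * x p.2) * A p.1 p.2 := by
    simp only [Fintype.sum_prod_type, dotProduct, mulVec, Finset.mul_sum]
    exact Finset.sum_congr rfl fun i _ => Finset.sum_congr rfl fun j _ => by ring
  rw [frobNorm, ← Real.sqrt_sq hxx, ← Real.sqrt_mul (sq_nonneg _), hform, ← hsq,
    ← Fintype.sum_prod_type' fun i j => A i j ^ 2]
  exact Real.abs_le_sqrt (Finset.sum_mul_sq_le_sq_mul_sq _ _ _)

theorem neg_le_frobNorm_sub_of_posSemidef {A P : Matrix (Fin n) (Fin n) ℝ} {lam : ℝ}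
    {v : Fin n → ℝ} (hv : A *ᵥ v = lam • v) (hv1 : v ⬝ᵥ v = 1)
    (hP : P.PosSemidef) : -lam ≤ frobNorm (A - P) := by
  have hPv : 0 ≤ v ⬝ᵥ P *ᵥ v := by simpa using hP.dotProduct_mulVec_nonneg v
  have hform : v ⬝ᵥ (A - P) *ᵥ v = lam - v ⬝ᵥ P *ᵥ v := by
    rw [sub_mulVec, dotProduct_sub, hv, dotProduct_smul, hv1, smul_eq_mul, mul_one]
  have := abs_dotProduct_mulVec_le_frobNorm (A - P) v
  rw [hform, hv1, one_mul] at this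
  linarith [neg_abs_le (lam - v ⬝ᵥ P *ᵥ v)]

end

theorem canonG_eq_smul_sub_vecMulVec {n : ℕ} {a b c : Fin n} (hab : a ≠ b) (hac : a ≠ c)
    (hbc : b ≠ c) :
    canonG a b c = (3 : ℝ)⁻¹ •
      (vecMulVec (Pi.single a 2 - Pi.single b 2 + Pi.single c 1)
          (Pi.single a 2 - Pi.single b 2 + Pi.single c 1) -
        vecMulVec (Pi.single a 2 + Pi.single b 1 - Pi.single c 2)
          (Pi.single a 2 + Pi.single b 1 - Pi.single c 2)) := by
  ext i j
  simp only [canonG, Matrix.smul_apply, Matrix.sub_apply, vecMulVec_apply, Pi.add_apply,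
    Pi.sub_apply, Pi.single_apply, smul_eq_mul]
  by_cases hia : i = a <;> by_cases hib : i = b <;> by_cases hic : i = c <;>
    by_cases hja : j = a <;> by_cases hjb : j = b <;> by_cases hjc : j = c <;>
    simp_all <;> norm_num

theorem dotProduct_mulVec_sub_smul_canonG_nonneg {n : ℕ} {a b c : Fin n} (hab : a ≠ b)
    (hac : a ≠ c) (hbc : b ≠ c) {K : Matrix (Fin n) (Fin n) ℝ} (hK : K.PosSemidef) {γ : ℝ}
    (hγ : 0 ≤ γ) {x : Fin n → ℝ}
    (hx : (Pi.single a 2 - Pi.single b 2 + Pi.single c 1 : Fin n → ℝ) ⬝ᵥ x = 0) :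
    0 ≤ x ⬝ᵥ (K - γ • canonG a b c) *ᵥ x := by
  set u : Fin n → ℝ := Pi.single a 2 - Pi.single b 2 + Pi.single c 1
  set s : Fin n → ℝ := Pi.single a 2 + Pi.single b 1 - Pi.single c 2
  have hs : (K + (γ / 3) • vecMulVec s s).PosSemidef :=
    hK.add ((posSemidef_vecMulVec_self_star s).smul (by positivity))
  have hK' : K - γ • canonG a b c = (K + (γ / 3) • vecMulVec s s) - (γ / 3) • vecMulVec u u := by
    rw [canonG_eq_smul_sub_vecMulVec hab hac hbc]
    module
  rw [hK']
  exact hs.dotProduct_sub_smul_vecMulVec_mulVec_nonneg _ hx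

theorem efficient_projection_is_nearest_psd_general {n : ℕ} (a b c : Fin n)
    (hab : a ≠ b) (hac : a ≠ c) (hbc : b ≠ c)
    (K : Matrix (Fin n) (Fin n) ℝ) (hK : K.PosSemidef) (γ : ℝ) (hγ : 0 ≤ γ)
    (K' : Matrix (Fin n) (Fin n) ℝ) (hK' : K' = K - γ • canonG a b c)
    (hsym : K'.IsHermitian)
    (K'' : Matrix (Fin n) (Fin n) ℝ)
    (hcase1 : K'.PosSemidef → K'' = K')
    (hcase2 : ¬ K'.PosSemidef →
      ∃ (lam : ℝ) (v : Fin n → ℝ), lam < 0 ∧ (∀ i : Fin n, lam ≤ hsym.eigenvalues i) ∧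
        K'.mulVec v = lam • v ∧ (∑ i, v i ^ 2 = 1) ∧
        K'' = K' - lam • Matrix.vecMulVec v v) :
    K''.PosSemidef ∧
      ∀ P : Matrix (Fin n) (Fin n) ℝ, P.PosSemidef →
        frobNorm (K' - K'') ≤ frobNorm (K' - P) := by
  by_cases hpsd : K'.PosSemidef
  · rw [hcase1 hpsd, sub_self]
    exact ⟨hpsd, fun P _ => by simp [frobNorm]⟩
  obtain ⟨lam, v, hlam, -, hv, hv1, rfl⟩ := hcase2 hpsd
  replace hv1 : v ⬝ᵥ v = 1 := by simpa [dotProduct, sq] using hv1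
  have hv0 : v ≠ 0 := by rintro rfl; simp at hv1
  have hplane : ∀ x, (Pi.single a 2 - Pi.single b 2 + Pi.single c 1 : Fin n → ℝ) ⬝ᵥ x = 0 →
      0 ≤ x ⬝ᵥ K' *ᵥ x := fun x hx =>
    hK' ▸ dotProduct_mulVec_sub_smul_canonG_nonneg hab hac hbc hK hγ hx
  refine ⟨hsym.posSemidef_sub_smul_vecMulVec hv hv1 fun w hw =>
    dotProduct_mulVec_nonneg_of_orthogonal_eigenvector hsym hplane hlam hv0 hv hw, fun P hP => ?_⟩
  rw [sub_sub_cancel, frobNorm_smul_vecMulVec_self, hv1, mul_one, abs_of_neg hlam]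
  exact neg_le_frobNorm_sub_of_posSemidef hv hv1 hP

/-- Theorem 1 of the paper: the efficient projection step applied to
`K' = K - γ • G(a,b,c)` (with `K` PSD and `γ ≥ 0`) produces the PSD matrix closest
to `K'` in Frobenius distance.  Here `K'' = K'` if `K'` is already PSD, and
otherwise `K'' = K' - λ↓ • v↓ v↓ᵀ` where `λ↓ < 0` is the smallest eigenvalue of
`K'` with unit eigenvector `v↓`. -/
theorem efficient_projection_is_nearest_psd {n : ℕ} (hn : 3 ≤ n) (a b c : Fin n)
    (hab : a ≠ b) (hac : a ≠ c) (hbc : b ≠ c)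
    (K : Matrix (Fin n) (Fin n) ℝ) (hK : K.PosSemidef) (γ : ℝ) (hγ : 0 ≤ γ)
    (K' : Matrix (Fin n) (Fin n) ℝ) (hK' : K' = K - γ • canonG a b c)
    (hsym : K'.IsHermitian)
    (K'' : Matrix (Fin n) (Fin n) ℝ)
    (hcase1 : K'.PosSemidef → K'' = K')
    (hcase2 : ¬ K'.PosSemidef →
      ∃ (lam : ℝ) (v : Fin n → ℝ), lam < 0 ∧ (∀ i : Fin n, lam ≤ hsym.eigenvalues i) ∧
        K'.mulVec v = lam • v ∧ (∑ i, v i ^ 2 = 1) ∧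
        K'' = K' - lam • Matrix.vecMulVec v v) :
    K''.PosSemidef ∧
      ∀ P : Matrix (Fin n) (Fin n) ℝ, P.PosSemidef →
        frobNorm (K' - K'') ≤ frobNorm (K' - P) :=
  efficient_projection_is_nearest_psd_general a b c hab hac hbc K hK γ hγ K' hK' hsym K'' hcase1
    hcase2
end
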